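/- arXiv:1002.1247 — 2 statements merged into one kernel-verified Lean document; each statement's English description precedes it below -/
import Mathlib

section
/- Let N ≥ 2 and M be the line segment in ℝ^N joining the origin to e₁ = (1,0,…,0). Let 0 ≤ γ < π/2 with cos γ < 1/√N, and let Φ be the 1×N matrix √N·(cos γ, −sin γ, 0, …, 0). Then for all distinct x₁,x₂ ∈ M, ‖Φx₁−Φx₂‖/‖x₁−x₂‖ = √N·cos γ; moreover for x = (1, tan(π/2−γ), 0, …, 0), the nearest point on M to x is x* = e₁ while Φx = 0, so the Euclidean-nearest point on M to Φx (in the image) is x̂ = 0, and ‖x−x̂‖/‖x−x*‖ = 1/cos γ = √N/(1−ε), where 1−ε := √N·cos γ. -/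
/-!
On the segment `M = [0, e₁]` the functional `Φ` is `t e₁ ↦ √N cos γ · t`, so it distorts every
chord of `M` by exactly `√N cos γ`. The point `x = e₁ + cot γ · e₂` projects orthogonally onto `e₁`,
but lies in the kernel of `Φ`, where the origin is already a best match in the image. Hence
`‖x - 0‖ / ‖x - e₁‖ = (1 / sin γ) / cot γ = 1 / cos γ`.
-/

open Real EuclideanSpace
open scoped InnerProductSpace

variable {ι : Type*} [DecidableEq ι] {i j : ι}

namespace EuclideanSpace

theorem smul_single (c a : ℝ) (i : ι) : c • single i a = single i (c * a) := by
  ext k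
  simp

variable [Fintype ι]

theorem norm_single_add_single (hij : i ≠ j) (a b : ℝ) :
    ‖single i a + single j b‖ = √(a ^ 2 + b ^ 2) := by
  have horth : ⟪single i a, single j b⟫_ℝ = 0 := by simp [inner_single_left, hij]
  rw [norm_add_eq_sqrt_iff_real_inner_eq_zero.2 horth, PiLp.norm_single, PiLp.norm_single,
    Real.norm_eq_abs, Real.norm_eq_abs, abs_mul_abs_self, abs_mul_abs_self, sq, sq]

theorem norm_single_add_single_sub_single (hij : i ≠ j) (a b t : ℝ) :
    ‖single i a + single j b - single i t‖ = √((a - t) ^ 2 + b ^ 2) := by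
  rw [add_sub_right_comm, ← PiLp.single_sub, norm_single_add_single hij]

theorem norm_single_add_single_sub_single_self_le (hij : i ≠ j) (a b t : ℝ) :
    ‖single i a + single j b - single i a‖ ≤ ‖single i a + single j b - single i t‖ := by
  rw [norm_single_add_single_sub_single hij, norm_single_add_single_sub_single hij, sub_self]
  exact sqrt_le_sqrt (by nlinarith [sq_nonneg (a - t)])

end EuclideanSpace

theorem Real.tan_pi_div_two_sub_eq_cos_div_sin (x : ℝ) : tan (π / 2 - x) = cos x / sin x := by
  rw [tan_pi_div_two_sub, tan_eq_sin_div_cos, inv_div]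

theorem Real.sqrt_one_add_cos_div_sin_sq {x : ℝ} (hx : 0 < sin x) :
    √(1 + (cos x / sin x) ^ 2) = 1 / sin x := by
  rw [← sqrt_sq (one_div_pos.2 hx).le]
  congr 1
  field_simp
  linear_combination sin_sq_add_cos_sq x

theorem Real.one_div_sqrt_natCast_le_one (N : ℕ) : 1 / √(N : ℝ) ≤ 1 := by
  rcases N.eq_zero_or_pos with rfl | hN
  · simp
  · rw [div_le_one (by positivity)]
    exact one_le_sqrt.2 (by exact_mod_cast hN)

noncomputable def obliqueFunctional (s γ : ℝ) (i j : ι) (v : EuclideanSpace ℝ ι) : ℝ :=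
  s * (cos γ * v i - sin γ * v j)

theorem obliqueFunctional_single_left (hij : i ≠ j) (s γ t : ℝ) :
    obliqueFunctional s γ i j (single i t) = s * cos γ * t := by
  simp [obliqueFunctional, hij.symm]
  ring

theorem obliqueFunctional_single_add_single_cos_div_sin (hij : i ≠ j) (s : ℝ) {γ : ℝ}
    (hγ : sin γ ≠ 0) :
    obliqueFunctional s γ i j (single i 1 + single j (cos γ / sin γ)) = 0 := by
  simp [obliqueFunctional, hij.symm, mul_div_cancel₀ _ hγ]

theorem abs_obliqueFunctional_sub_div_norm_sub [Fintype ι] (hij : i ≠ j) {s γ : ℝ}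
    (hsγ : 0 ≤ s * cos γ) {t₁ t₂ : ℝ} (ht : t₁ ≠ t₂) :
    |obliqueFunctional s γ i j (single i t₁) - obliqueFunctional s γ i j (single i t₂)| /
      ‖single i t₁ - single i t₂‖ = s * cos γ := by
  rw [obliqueFunctional_single_left hij, obliqueFunctional_single_left hij, ← dist_eq_norm,
    PiLp.dist_single_same, Real.dist_eq, ← mul_sub, abs_mul, abs_of_nonneg hsγ,
    mul_div_cancel_right₀ _ (abs_ne_zero.2 (sub_ne_zero.2 ht))]

theorem stmt2 (N : ℕ) (hN : 2 ≤ N) (γ : ℝ) (hγ0 : 0 ≤ γ) (hγ : γ < Real.pi / 2)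
    (hcos : Real.cos γ < 1 / Real.sqrt N)
    (e₁ : EuclideanSpace ℝ (Fin N)) (he₁ : e₁ = EuclideanSpace.single (⟨0, by omega⟩ : Fin N) 1)
    (M : Set (EuclideanSpace ℝ (Fin N))) (hM : M = {p | ∃ t ∈ Set.Icc (0:ℝ) 1, p = t • e₁})
    (Φ : EuclideanSpace ℝ (Fin N) → ℝ)
    (hΦ : Φ = fun v => Real.sqrt N * (Real.cos γ * v (⟨0, by omega⟩ : Fin N)
      - Real.sin γ * v (⟨1, by omega⟩ : Fin N)))
    (x : EuclideanSpace ℝ (Fin N))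
    (hx : x = fun i => if i = (⟨0, by omega⟩ : Fin N) then 1
      else if i = (⟨1, by omega⟩ : Fin N) then Real.tan (Real.pi / 2 - γ) else 0) :
    (∀ x₁ ∈ M, ∀ x₂ ∈ M, x₁ ≠ x₂ →
        |Φ x₁ - Φ x₂| / ‖x₁ - x₂‖ = Real.sqrt N * Real.cos γ) ∧
    (∀ p ∈ M, ‖x - e₁‖ ≤ ‖x - p‖) ∧
    Φ x = 0 ∧
    ((0 : EuclideanSpace ℝ (Fin N)) ∈ M ∧ ∀ p ∈ M, |Φ x - Φ 0| ≤ |Φ x - Φ p|) ∧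
    ‖x - 0‖ / ‖x - e₁‖ = 1 / Real.cos γ ∧
    1 / Real.cos γ = Real.sqrt N / (Real.sqrt N * Real.cos γ) := by
  set i₀ : Fin N := ⟨0, by omega⟩
  set i₁ : Fin N := ⟨1, by omega⟩
  have h01 : i₀ ≠ i₁ := by simp [i₀, i₁, Fin.ext_iff]
  have hγpos : 0 < γ := hγ0.lt_of_ne <| by
    rintro rfl
    linarith [cos_zero, one_div_sqrt_natCast_le_one N]
  have hcos0 : 0 < cos γ := cos_pos_of_mem_Ioo ⟨by linarith [pi_pos], hγ⟩
  have hsin0 : 0 < sin γ := sin_pos_of_pos_of_lt_pi hγpos (by linarith [pi_pos])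
  have hM' : M = single i₀ '' Set.Icc 0 1 := by
    ext p
    simp [hM, he₁, smul_single, eq_comm]
  have hx' : x = single i₀ 1 + single i₁ (cos γ / sin γ) := by
    ext k
    simp only [hx, tan_pi_div_two_sub_eq_cos_div_sin]
    split_ifs <;> simp_all
  have hΦ' : Φ = obliqueFunctional √N γ i₀ i₁ := hΦ
  subst hM' hx' hΦ' he₁
  have hΦx := obliqueFunctional_single_add_single_cos_div_sin h01 √N hsin0.ne'
  refine ⟨?_, ?_, hΦx, ⟨⟨0, by simp, by simp⟩, ?_⟩, ?_, ?_⟩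
  · rintro _ ⟨t₁, -, rfl⟩ _ ⟨t₂, -, rfl⟩ hne
    exact abs_obliqueFunctional_sub_div_norm_sub h01 (by positivity) (ne_of_apply_ne _ hne)
  · rintro _ ⟨t, -, rfl⟩
    exact norm_single_add_single_sub_single_self_le h01 1 _ t
  · intro p _
    rw [hΦx, show obliqueFunctional √N γ i₀ i₁ 0 = 0 by simp [obliqueFunctional], sub_zero,
      abs_zero]
    exact abs_nonneg _
  · rw [sub_zero, norm_single_add_single h01, norm_single_add_single_sub_single h01, sub_self,
      one_pow, sqrt_one_add_cos_div_sin_sq hsin0, zero_pow two_ne_zero, zero_add,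
      sqrt_sq (by positivity)]
    field_simp
  · rw [div_mul_cancel_left₀ (by positivity), one_div]
end

section
/- Let M be a compact subset of ℝ^N, A ⊆ M a finite set of anchor points such that every point of M is within ℓ₂-distance T of some point of A, and Φ : ℝ^N → ℝ^m linear. Suppose: (i) for all a₁,a₂ ∈ A ∪ {x, x*}, (1−ε₁)‖a₁−a₂‖ ≤ ‖Φa₁−Φa₂‖ ≤ (1+ε₁)‖a₁−a₂‖; (ii) for all p,q ∈ M, (1−ε)‖p−q‖ ≤ ‖Φp−Φq‖ ≤ (1+ε)‖p−q‖. Let y = Φx + n, let x̂ ∈ M minimize ‖y − Φx'‖ and x* ∈ M minimize ‖x − x'‖. Then ‖x − x̂‖ ≤ (2‖n‖)/(1−ε₁) + ((1+ε₁)/(1−ε₁))·‖x − x*‖ + T·((1+ε)/(1−ε₁) + 1). -/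
/-!
Let `a` be an anchor within `T` of `x̂`. The lower bound of the embedding at the pair `(x, a)`
and its upper bound at `(x̂, a)` give
`‖x - x̂‖ ≤ ‖Φx - Φx̂‖ / (1 - ε₁) + T ((1 + ε) / (1 - ε₁) + 1)`.
Since `x̂` fits `y` at least as well as `x*`, the triangle inequality through `y` gives
`‖Φx - Φx̂‖ ≤ 2‖n‖ + ‖Φx - Φx*‖`, and the upper bound at `(x, x*)` finishes the estimate.
-/

variable {E F : Type*} [SeminormedAddCommGroup F]

lemma norm_sub_le_two_mul_norm_add_of_residual_le {f : E → F} {x xhat xstar : E} {n y : F}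
    (hy : y = f x + n) (hfit : ‖y - f xhat‖ ≤ ‖y - f xstar‖) :
    ‖f x - f xhat‖ ≤ 2 * ‖n‖ + ‖f x - f xstar‖ := by
  have hxy : ‖f x - y‖ = ‖n‖ := by
    rw [hy, sub_add_cancel_left, norm_neg]
  have hystar : ‖y - f xstar‖ ≤ ‖n‖ + ‖f x - f xstar‖ := by
    rw [← hxy, norm_sub_rev (f x) y]
    exact norm_sub_le_norm_sub_add_norm_sub _ _ _
  calc ‖f x - f xhat‖ ≤ ‖f x - y‖ + ‖y - f xhat‖ := norm_sub_le_norm_sub_add_norm_sub _ _ _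
    _ ≤ 2 * ‖n‖ + ‖f x - f xstar‖ := by linarith

lemma norm_sub_le_of_near_anchor [SeminormedAddCommGroup E] {f : E → F} {x z a : E} {c L T : ℝ}
    (hc : 0 < c) (hL : 0 ≤ L)
    (hlow : c * ‖x - a‖ ≤ ‖f x - f a‖) (hup : ‖f z - f a‖ ≤ L * ‖z - a‖) (hza : ‖z - a‖ ≤ T) :
    ‖x - z‖ ≤ ‖f x - f z‖ / c + T * (L / c + 1) := by
  have hxa : c * ‖x - a‖ ≤ ‖f x - f z‖ + L * T :=
    calc c * ‖x - a‖ ≤ ‖f x - f z‖ + ‖f z - f a‖ :=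
          hlow.trans (norm_sub_le_norm_sub_add_norm_sub _ _ _)
      _ ≤ ‖f x - f z‖ + L * T := by gcongr; exact hup.trans (by gcongr)
  calc ‖x - z‖ ≤ ‖x - a‖ + ‖z - a‖ := by
        simpa only [norm_sub_rev a z] using norm_sub_le_norm_sub_add_norm_sub x a z
    _ ≤ (‖f x - f z‖ + L * T) / c + T := by
        gcongr
        rwa [le_div_iff₀' hc]
    _ = ‖f x - f z‖ / c + T * (L / c + 1) := by ring

theorem stmt6_general (N m : ℕ) (ε ε₁ T : ℝ) (hε₁0 : 0 < ε₁) (hε₁ε : ε₁ ≤ ε) (hε1 : ε < 1)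
    (M : Set (EuclideanSpace ℝ (Fin N)))
    (A : Set (EuclideanSpace ℝ (Fin N))) (hAM : A ⊆ M)
    (hcover : ∀ p ∈ M, ∃ a ∈ A, ‖p - a‖ ≤ T)
    (Φ : EuclideanSpace ℝ (Fin N) →ₗ[ℝ] EuclideanSpace ℝ (Fin m))
    (x : EuclideanSpace ℝ (Fin N)) (n : EuclideanSpace ℝ (Fin m))
    (y : EuclideanSpace ℝ (Fin m)) (hy : y = Φ x + n)
    (xstar : EuclideanSpace ℝ (Fin N)) (hxstar : xstar ∈ M)
    (xhat : EuclideanSpace ℝ (Fin N)) (hxhat : xhat ∈ M)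
    (hxhatmin : ∀ x' ∈ M, ‖y - Φ xhat‖ ≤ ‖y - Φ x'‖)
    (hembA : ∀ a₁ ∈ A ∪ {x, xstar}, ∀ a₂ ∈ A ∪ {x, xstar},
      (1 - ε₁) * ‖a₁ - a₂‖ ≤ ‖Φ a₁ - Φ a₂‖ ∧ ‖Φ a₁ - Φ a₂‖ ≤ (1 + ε₁) * ‖a₁ - a₂‖)
    (hembM : ∀ p ∈ M, ∀ q ∈ M,
      (1 - ε) * ‖p - q‖ ≤ ‖Φ p - Φ q‖ ∧ ‖Φ p - Φ q‖ ≤ (1 + ε) * ‖p - q‖) :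
    ‖x - xhat‖ ≤ 2 * ‖n‖ / (1 - ε₁) + ((1 + ε₁) / (1 - ε₁)) * ‖x - xstar‖ +
      T * ((1 + ε) / (1 - ε₁) + 1) := by
  obtain ⟨a, haA, hxhat_a⟩ := hcover xhat hxhat
  have hx : x ∈ A ∪ {x, xstar} := by simp
  have hxstar' : xstar ∈ A ∪ {x, xstar} := by simp
  have hc : 0 < 1 - ε₁ := by linarith
  have hanchor := norm_sub_le_of_near_anchor hc (by linarith) (hembA x hx a (Or.inl haA)).1
    (hembM xhat hxhat a (hAM haA)).2 hxhat_a
  have hresidual := norm_sub_le_two_mul_norm_add_of_residual_le hy (hxhatmin xstar hxstar)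
  calc ‖x - xhat‖
      ≤ (2 * ‖n‖ + (1 + ε₁) * ‖x - xstar‖) / (1 - ε₁) + T * ((1 + ε) / (1 - ε₁) + 1) := by
        refine hanchor.trans (add_le_add_left (div_le_div_of_nonneg_right ?_ hc.le) _)
        exact hresidual.trans (by gcongr; exact (hembA x hx xstar hxstar').2)
    _ = _ := by ring

theorem stmt6 (N m : ℕ) (ε ε₁ T : ℝ) (hε₁0 : 0 < ε₁) (hε₁ε : ε₁ ≤ ε) (hε1 : ε < 1)
    (hT : 0 ≤ T)
    (M : Set (EuclideanSpace ℝ (Fin N))) (hM : IsCompact M)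
    (A : Set (EuclideanSpace ℝ (Fin N))) (hAfin : A.Finite) (hAM : A ⊆ M)
    (hcover : ∀ p ∈ M, ∃ a ∈ A, ‖p - a‖ ≤ T)
    (Φ : EuclideanSpace ℝ (Fin N) →ₗ[ℝ] EuclideanSpace ℝ (Fin m))
    (x : EuclideanSpace ℝ (Fin N)) (n : EuclideanSpace ℝ (Fin m))
    (y : EuclideanSpace ℝ (Fin m)) (hy : y = Φ x + n)
    (xstar : EuclideanSpace ℝ (Fin N)) (hxstar : xstar ∈ M)
    (hxstarmin : ∀ x' ∈ M, ‖x - xstar‖ ≤ ‖x - x'‖)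
    (xhat : EuclideanSpace ℝ (Fin N)) (hxhat : xhat ∈ M)
    (hxhatmin : ∀ x' ∈ M, ‖y - Φ xhat‖ ≤ ‖y - Φ x'‖)
    (hembA : ∀ a₁ ∈ A ∪ {x, xstar}, ∀ a₂ ∈ A ∪ {x, xstar},
      (1 - ε₁) * ‖a₁ - a₂‖ ≤ ‖Φ a₁ - Φ a₂‖ ∧ ‖Φ a₁ - Φ a₂‖ ≤ (1 + ε₁) * ‖a₁ - a₂‖)
    (hembM : ∀ p ∈ M, ∀ q ∈ M,
      (1 - ε) * ‖p - q‖ ≤ ‖Φ p - Φ q‖ ∧ ‖Φ p - Φ q‖ ≤ (1 + ε) * ‖p - q‖) :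
    ‖x - xhat‖ ≤ 2 * ‖n‖ / (1 - ε₁) + ((1 + ε₁) / (1 - ε₁)) * ‖x - xstar‖ +
      T * ((1 + ε) / (1 - ε₁) + 1) :=
  stmt6_general N m ε ε₁ T hε₁0 hε₁ε hε1 M A hAM hcover Φ x n y hy xstar hxstar xhat hxhat hxhatmin
    hembA hembM
end
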